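/- arXiv:2505.01375 — 3 statements merged into one kernel-verified Lean document; each statement's English description precedes it below -/
import Mathlib

section
/- The n-linear part Lie(n) of the free Lie ring on n generators x¹,…,xⁿ over ℤ is a free abelian group of rank (n−1)!, with basis given by the right-normed bracketed words w_σ = [x^{σ(1)}, [x^{σ(2)}, …, [x^{σ(n−1)}, xⁿ]…]] for σ ranging over the permutations of {1,…,n−1}. -/
/-- Bracketed words ("Lie trees") on an alphabet `α`. -/
inductive LieWord (α : Type) : Type
  | leaf : α → LieWord α
  | node : LieWord α → LieWord α → LieWord α

namespace LieWord

/-- The list of letters of a bracketed word, from left to right. -/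
def leaves {α : Type} : LieWord α → List α
  | leaf a => [a]
  | node l r => l.leaves ++ r.leaves

/-- The evaluation of a bracketed word in the free Lie ring (= free Lie algebra over `ℤ`)
on generators `x¹, …, xⁿ`. -/
noncomputable def toLie {n : ℕ} : LieWord (Fin n) → FreeLieAlgebra ℤ (Fin n)
  | leaf a => FreeLieAlgebra.of ℤ a
  | node l r => ⁅l.toLie, r.toLie⁆

end LieWord

/-- `Lie(n)`: the multilinear part of the free Lie ring on `n` generators, i.e. the
subgroup (= `ℤ`-submodule) spanned by bracketed words containing each generator exactly
once. -/
noncomputable def LieN (n : ℕ) : Submodule ℤ (FreeLieAlgebra ℤ (Fin n)) :=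
  Submodule.span ℤ
    {x | ∃ t : LieWord (Fin n), List.Perm t.leaves (List.finRange n) ∧ t.toLie = x}

/-- The right-normed bracketed word `[x^{l₀}, [x^{l₁}, …, [x^{l_k}, x^{last}]…]]`. -/
noncomputable def rightNormed {n : ℕ} (last : Fin n) (l : List (Fin n)) :
    FreeLieAlgebra ℤ (Fin n) :=
  l.foldr (fun i acc => ⁅FreeLieAlgebra.of ℤ i, acc⁆) (FreeLieAlgebra.of ℤ last)

/-! ### Auxiliary machinery -/

section Aux

variable {N : ℕ}

attribute [local instance] LieRing.ofAssociativeRing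

/-- The canonical Lie algebra map into the free associative algebra. -/
noncomputable def toAssoc (N : ℕ) : FreeLieAlgebra ℤ (Fin N) →ₗ⁅ℤ⁆ FreeAlgebra ℤ (Fin N) :=
  FreeLieAlgebra.lift ℤ (fun i => FreeAlgebra.ι ℤ i)

/-- The right-normed iterated commutator in the free associative algebra. -/
noncomputable def assocRN (last : Fin N) (l : List (Fin N)) : FreeAlgebra ℤ (Fin N) :=
  l.foldr (fun i acc => FreeAlgebra.ι ℤ i * acc - acc * FreeAlgebra.ι ℤ i)
    (FreeAlgebra.ι ℤ last)

theorem toAssoc_rightNormed (last : Fin N) (l : List (Fin N)) :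
    toAssoc N (rightNormed last l) = assocRN last l := by
  induction l with
  | nil =>
    simp [rightNormed, assocRN, toAssoc, FreeLieAlgebra.lift_of_apply]
    exact FreeLieAlgebra.lift_of_apply _ _
  | cons i l ih =>
    have : rightNormed last (i :: l) = ⁅FreeLieAlgebra.of ℤ i, rightNormed last l⁆ := rfl
    rw [this]
    rw [LieHom.map_lie, ih]
    simp [toAssoc, FreeLieAlgebra.lift_of_apply, assocRN, Ring.lie_def]
    erw [FreeLieAlgebra.lift_of_apply]

theorem coeff_assocRN (last : Fin N) (l : List (Fin N)) (hl : last ∉ l)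
    (w : List (Fin N)) :
    (FreeAlgebra.equivMonoidAlgebraFreeMonoid (assocRN last l)).coeff
      (FreeMonoid.ofList (w ++ [last]))
      = if w = l then 1 else 0 := by
  classical
  induction l generalizing w with
  | nil =>
    have h1 : assocRN last ([] : List (Fin N)) = FreeAlgebra.ι ℤ last := rfl
    rw [h1]
    have h2 : FreeAlgebra.equivMonoidAlgebraFreeMonoid (FreeAlgebra.ι ℤ last)
        = MonoidAlgebra.single (FreeMonoid.of last) 1 := by
      simp [FreeAlgebra.equivMonoidAlgebraFreeMonoid]
    rw [h2, MonoidAlgebra.single_apply]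
    by_cases hw : w = []
    · subst hw; simp
    · simp only [hw, if_false]
      rw [if_neg]
      intro h
      have := congrArg FreeMonoid.toList h
      simp only [FreeMonoid.toList_of, FreeMonoid.toList_ofList] at this
      have hlen := congrArg List.length this
      simp only [List.length_append, List.length_cons, List.length_nil] at hlen
      exact hw (List.length_eq_zero_iff.mp (by omega))
  | cons i l ih =>
    have hil : last ≠ i := fun h => hl (h ▸ List.mem_cons_self)
    have hl' : last ∉ l := fun h => hl (List.mem_cons_of_mem _ h)
    have h1 : assocRN last (i :: l)
        = FreeAlgebra.ι ℤ i * assocRN last l - assocRN last l * FreeAlgebra.ι ℤ i := rfl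
    rw [h1, map_sub, map_mul, map_mul]
    have h2 : FreeAlgebra.equivMonoidAlgebraFreeMonoid (FreeAlgebra.ι ℤ i)
        = MonoidAlgebra.single (FreeMonoid.of i) 1 := by
      simp [FreeAlgebra.equivMonoidAlgebraFreeMonoid]
    rw [h2, MonoidAlgebra.coeff_sub, Finsupp.sub_apply]
    have hright : ((FreeAlgebra.equivMonoidAlgebraFreeMonoid (assocRN last l)
          * MonoidAlgebra.single (FreeMonoid.of i) 1
          : MonoidAlgebra ℤ (FreeMonoid (Fin N)))).coeff
        (FreeMonoid.ofList (w ++ [last])) = 0 := by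
      apply MonoidAlgebra.mul_single_apply_of_not_exists_mul
      rintro ⟨d, hd⟩
      have := congrArg FreeMonoid.toList hd
      simp only [FreeMonoid.toList_ofList, FreeMonoid.toList_mul, FreeMonoid.toList_of] at this
      have h3 : (w ++ [last]).getLast? = (FreeMonoid.toList d ++ [i]).getLast? := by rw [this]
      rw [List.getLast?_concat, List.getLast?_concat] at h3
      exact hil (Option.some.inj h3)
    rw [hright, sub_zero]
    rcases w with _ | ⟨a, w⟩
    · rw [MonoidAlgebra.single_mul_apply_of_not_exists_mul]
      · simp
      rintro ⟨d, hd⟩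
      have := congrArg FreeMonoid.toList hd
      simp only [FreeMonoid.toList_ofList, FreeMonoid.toList_mul, FreeMonoid.toList_of,
        List.nil_append, List.singleton_append] at this
      exact hil (List.cons.inj this).1
    · by_cases hai : a = i
      · subst hai
        have H : ∀ d : FreeMonoid (Fin N),
            FreeMonoid.of a * d = FreeMonoid.ofList ((a :: w) ++ [last])
              ↔ d = FreeMonoid.ofList (w ++ [last]) := by
          intro d
          constructor
          · intro h
            have h5 := congrArg FreeMonoid.toList h
            have h4 : FreeMonoid.toList d = w ++ [last] := by simpa using h5
            have h6 := congrArg FreeMonoid.ofList h4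
            rwa [FreeMonoid.ofList_toList] at h6
          · rintro rfl; rfl
        rw [MonoidAlgebra.single_mul_apply_aux _ (fun d _ => H d), one_mul, ih hl' w]
        by_cases hw : w = l <;> simp [hw]
      · rw [MonoidAlgebra.single_mul_apply_of_not_exists_mul]
        · rw [if_neg]; intro h; exact hai (List.cons.inj h).1
        rintro ⟨d, hd⟩
        have := congrArg FreeMonoid.toList hd
        simp only [FreeMonoid.toList_ofList, FreeMonoid.toList_mul, FreeMonoid.toList_of,
          List.singleton_append, List.cons_append] at this
        exact hai (List.cons.inj this).1

/-- The indexed family of right-normed words. -/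
noncomputable def wRN (n : ℕ) (σ : Equiv.Perm (Fin n)) : FreeLieAlgebra ℤ (Fin (n + 1)) :=
  rightNormed (Fin.last n) ((List.finRange n).map fun i => Fin.castSucc (σ i))

theorem wRN_linearIndependent (n : ℕ) : LinearIndependent ℤ (wRN n) := by
  classical
  rw [Fintype.linearIndependent_iff]
  intro g hg τ
  set lst : Equiv.Perm (Fin n) → List (Fin (n+1)) :=
    fun σ => (List.finRange n).map fun i => Fin.castSucc (σ i) with hlst
  have hnotin : ∀ σ, Fin.last n ∉ lst σ := by
    intro σ h
    rcases List.mem_map.mp h with ⟨i, _, hi⟩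
    exact absurd hi (Fin.castSucc_lt_last (σ i)).ne
  let φ : FreeLieAlgebra ℤ (Fin (n+1)) →ₗ[ℤ] ℤ :=
    { toFun := fun x => (FreeAlgebra.equivMonoidAlgebraFreeMonoid ((toAssoc (n+1)) x)).coeff
        (FreeMonoid.ofList (lst τ ++ [Fin.last n]))
      map_add' := by
        intro x y; rw [map_add, map_add]; exact Finsupp.add_apply _ _ _
      map_smul' := by
        intro c x; rw [map_smul, map_smul]; exact Finsupp.smul_apply _ _ _ }
  have hφ : ∀ σ, φ (wRN n σ) = if σ = τ then 1 else 0 := by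
    intro σ
    have : φ (wRN n σ)
        = (FreeAlgebra.equivMonoidAlgebraFreeMonoid (assocRN (Fin.last n) (lst σ))).coeff
          (FreeMonoid.ofList (lst τ ++ [Fin.last n])) := by
      simp only [φ, LinearMap.coe_mk, AddHom.coe_mk, wRN]
      rw [toAssoc_rightNormed]
    rw [this, coeff_assocRN _ _ (hnotin σ)]
    congr 1
    simp only [eq_iff_iff]
    constructor
    · intro h
      have h2 : (fun i => Fin.castSucc (τ i)) = (fun i => Fin.castSucc (σ i)) := by
        have := h
        rw [hlst] at this
        simp only [← List.ofFn_eq_map] at this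
        exact funext fun i => congrFun (List.ofFn_injective this) i
      ext i
      have h3 := congrFun h2 i
      exact congrArg Fin.val (Fin.castSucc_injective n h3).symm
    · rintro rfl; rfl
  have h0 : ∑ σ, g σ * φ (wRN n σ) = 0 := by
    have h4 := congrArg φ hg
    rw [map_sum, map_zero] at h4
    simpa [smul_eq_mul] using h4
  rw [Finset.sum_congr rfl (fun σ _ => by rw [hφ σ])] at h0
  simpa using h0

/-! ### Spanning -/

def RNset (z : Fin N) (m : List (Fin N)) : Set (FreeLieAlgebra ℤ (Fin N)) :=
  {x | ∃ l, List.Perm l m ∧ rightNormed z l = x}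

theorem RNspan_mono_perm {z : Fin N} {m m' : List (Fin N)} (h : List.Perm m m') :
    Submodule.span ℤ (RNset z m) ≤ Submodule.span ℤ (RNset z m') := by
  apply Submodule.span_mono
  rintro x ⟨l, hl, rfl⟩
  exact ⟨l, hl.trans h, rfl⟩

theorem bracket_mem_of_forall {p : FreeLieAlgebra ℤ (Fin N)}
    {S : Set (FreeLieAlgebra ℤ (Fin N))} {P : Submodule ℤ (FreeLieAlgebra ℤ (Fin N))}
    (h : ∀ x ∈ S, ⁅p, x⁆ ∈ P) {y} (hy : y ∈ Submodule.span ℤ S) : ⁅p, y⁆ ∈ P := by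
  have hle : Submodule.span ℤ S ≤
      P.comap (LieAlgebra.ad ℤ (FreeLieAlgebra ℤ (Fin N)) p) := by
    rw [Submodule.span_le]
    intro x hx
    simpa [Submodule.mem_comap, LieAlgebra.ad_apply] using h x hx
  simpa [LieAlgebra.ad_apply] using hle hy

theorem lie_rightNormed_mem (u : LieWord (Fin N)) (z : Fin N) (m : List (Fin N)) :
    ⁅u.toLie, rightNormed z m⁆ ∈ Submodule.span ℤ (RNset z (u.leaves ++ m)) := by
  induction u generalizing m with
  | leaf a =>
    exact Submodule.subset_span ⟨a :: m, List.Perm.refl _, rfl⟩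
  | node p q ihp ihq =>
    have e1 : (LieWord.node p q).toLie = ⁅p.toLie, q.toLie⁆ := rfl
    have e2 : (LieWord.node p q).leaves = p.leaves ++ q.leaves := rfl
    rw [e1, e2, lie_lie]
    apply sub_mem
    · refine bracket_mem_of_forall ?_ (ihq m)
      rintro x ⟨l, hl, rfl⟩
      refine RNspan_mono_perm ?_ (ihp l)
      have h3 := hl.append_left p.leaves
      rwa [← List.append_assoc] at h3
    · refine bracket_mem_of_forall ?_ (ihp m)
      rintro x ⟨l, hl, rfl⟩
      refine RNspan_mono_perm ?_ (ihq l)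
      have h3 := (hl.append_left q.leaves).trans (List.perm_append_comm_assoc _ _ _)
      rwa [← List.append_assoc] at h3

theorem toLie_mem_span (t : LieWord (Fin N)) (hn : t.leaves.Nodup)
    (z : Fin N) (hz : z ∈ t.leaves) :
    t.toLie ∈ Submodule.span ℤ (RNset z (t.leaves.erase z)) := by
  classical
  induction t with
  | leaf a =>
    have : z = a := by simpa [LieWord.leaves] using hz
    subst this
    refine Submodule.subset_span ⟨[], ?_, rfl⟩
    simp [LieWord.leaves]
  | node p q ihp ihq =>
    have e1 : (LieWord.node p q).toLie = ⁅p.toLie, q.toLie⁆ := rfl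
    have e2 : (LieWord.node p q).leaves = p.leaves ++ q.leaves := rfl
    rw [e2] at hn hz ⊢
    have hnp : p.leaves.Nodup := hn.of_append_left
    have hnq : q.leaves.Nodup := hn.of_append_right
    have hdisj := List.disjoint_of_nodup_append hn
    rcases List.mem_append.mp hz with hzp | hzq
    · have hznq : z ∉ q.leaves := fun h => hdisj hzp h
      have h1 : (⁅q.toLie, p.toLie⁆ : FreeLieAlgebra ℤ (Fin N)) ∈
          Submodule.span ℤ (RNset z ((p.leaves ++ q.leaves).erase z)) := by
        refine bracket_mem_of_forall ?_ (ihp hnp hzp)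
        rintro x ⟨l, hl, rfl⟩
        refine RNspan_mono_perm ?_ (lie_rightNormed_mem q z l)
        have h3 := (hl.append_left q.leaves).trans
          (List.perm_append_comm (l₁ := q.leaves) (l₂ := p.leaves.erase z))
        rwa [← List.erase_append_left _ hzp] at h3
      rw [e1, ← lie_skew]
      exact neg_mem h1
    · have hznp : z ∉ p.leaves := fun h => hdisj h hzq
      rw [e1]
      refine bracket_mem_of_forall ?_ (ihq hnq hzq)
      rintro x ⟨l, hl, rfl⟩
      refine RNspan_mono_perm ?_ (lie_rightNormed_mem p z l)
      have h3 := hl.append_left p.leaves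
      rwa [← List.erase_append_right _ hznp] at h3

theorem finRange_succ_last (n : ℕ) :
    List.finRange (n+1) = ((List.finRange n).map Fin.castSucc) ++ [Fin.last n] := by
  rw [← List.ofFn_id, List.ofFn_succ' id, List.concat_eq_append, ← List.ofFn_id n,
    List.ofFn_eq_map]
  simp [List.ofFn_eq_map]

theorem exists_perm_of_perm_finRange {n : ℕ} (l0 : List (Fin n))
    (h : List.Perm l0 (List.finRange n)) :
    ∃ σ : Equiv.Perm (Fin n), (List.finRange n).map σ = l0 := by
  classical
  have hlen : l0.length = n := by
    have := h.length_eq; simpa [List.length_finRange] using this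
  have hnd : l0.Nodup := (h.nodup_iff).mpr (List.nodup_finRange n)
  let f : Fin n → Fin n := fun i => l0.get (Fin.cast hlen.symm i)
  have hinj : Function.Injective f := by
    intro i j hij
    have := (List.Nodup.get_inj_iff hnd).mp hij
    exact Fin.cast_injective _ this
  have hbij : Function.Bijective f := (Finite.injective_iff_bijective).mp hinj
  refine ⟨Equiv.ofBijective f hbij, ?_⟩
  apply List.ext_getElem
  · simp [List.length_finRange, hlen]
  · intro i h1 h2
    simp only [List.getElem_map, Equiv.ofBijective_apply, f]
    simp [List.getElem_finRange, List.get_eq_getElem, Fin.cast]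

/-- The right comb Lie word realizing a right-normed word. -/
def comb {N : ℕ} (last : Fin N) : List (Fin N) → LieWord (Fin N)
  | [] => LieWord.leaf last
  | i :: l => LieWord.node (LieWord.leaf i) (comb last l)

theorem comb_toLie {N : ℕ} (last : Fin N) (l : List (Fin N)) :
    (comb last l).toLie = rightNormed last l := by
  induction l with
  | nil => rfl
  | cons i l ih =>
    show ⁅FreeLieAlgebra.of ℤ i, (comb last l).toLie⁆ = _
    rw [ih]; rfl

theorem comb_leaves {N : ℕ} (last : Fin N) (l : List (Fin N)) :
    (comb last l).leaves = l ++ [last] := by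
  induction l with
  | nil => rfl
  | cons i l ih =>
    show i :: (comb last l).leaves = _
    rw [ih]; rfl

theorem lieN_eq_span (n : ℕ) :
    LieN (n + 1) = Submodule.span ℤ (Set.range (wRN n)) := by
  classical
  apply le_antisymm
  · rw [LieN, Submodule.span_le]
    rintro x ⟨t, hperm, rfl⟩
    have hnodup : t.leaves.Nodup := hperm.nodup_iff.mpr (List.nodup_finRange _)
    have hz : Fin.last n ∈ t.leaves := hperm.mem_iff.mpr (List.mem_finRange _)
    have h := toLie_mem_span t hnodup (Fin.last n) hz
    refine Submodule.span_le.mpr ?_ h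
    rintro y ⟨l, hl, rfl⟩
    -- l is a permutation of `map castSucc (finRange n)`
    have herase : List.Perm (t.leaves.erase (Fin.last n))
        ((List.finRange n).map Fin.castSucc) := by
      have h1 := hperm.erase (Fin.last n)
      rw [finRange_succ_last n] at h1
      have hnot : Fin.last n ∉ (List.finRange n).map Fin.castSucc := by
        intro h
        rcases List.mem_map.mp h with ⟨i, _, hi⟩
        exact absurd hi (Fin.castSucc_lt_last i).ne
      rw [List.erase_append_right _ hnot] at h1
      simpa using h1
    have hl2 : List.Perm l ((List.finRange n).map Fin.castSucc) := hl.trans herase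
    have hne : ∀ x ∈ l, x ≠ Fin.last n := by
      intro x hx
      rcases List.mem_map.mp (hl2.mem_iff.mp hx) with ⟨i, _, hi⟩
      exact hi ▸ (Fin.castSucc_lt_last i).ne
    set l0 : List (Fin n) := l.pmap (fun x hx => Fin.castPred x hx) hne with hl0
    have hmap : l0.map Fin.castSucc = l := by
      rw [hl0, List.map_pmap]
      have : ∀ (x : Fin (n+1)) (hx : x ≠ Fin.last n),
          Fin.castSucc (Fin.castPred x hx) = x := fun x hx => Fin.castSucc_castPred x hx
      calc l.pmap (fun x hx => Fin.castSucc (Fin.castPred x hx)) hne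
          = l.pmap (fun x _ => x) hne := by
            apply List.pmap_congr_left
            intro x hx h1 h2
            exact this x h1
        _ = l := by rw [List.pmap_eq_map]; simp
    have hl0nd : l0.Nodup := by
      have : (l0.map Fin.castSucc).Nodup := hmap ▸ hl2.nodup_iff.mpr
        ((List.nodup_finRange n).map (Fin.castSucc_injective n))
      exact this.of_map _
    have hl0perm : List.Perm l0 (List.finRange n) := by
      rw [List.perm_ext_iff_of_nodup hl0nd (List.nodup_finRange n)]
      intro a
      simp only [List.mem_finRange, iff_true]
      have : Fin.castSucc a ∈ l := by
        apply hl2.mem_iff.mpr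
        exact List.mem_map_of_mem (List.mem_finRange a)
      rw [← hmap] at this
      rcases List.mem_map.mp this with ⟨b, hb, heq⟩
      have : b = a := Fin.castSucc_injective n heq
      exact this ▸ hb
    rcases exists_perm_of_perm_finRange l0 hl0perm with ⟨σ, hσ⟩
    have hmapσ : (List.finRange n).map (fun i => Fin.castSucc (σ i)) = l := by
      rw [show (fun i => Fin.castSucc (σ i)) = Fin.castSucc ∘ σ from rfl,
        ← List.map_map, hσ, hmap]
    apply Submodule.subset_span
    exact ⟨σ, by rw [wRN, hmapσ]⟩
  · rw [Submodule.span_le]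
    rintro x ⟨σ, rfl⟩
    apply Submodule.subset_span
    refine ⟨comb (Fin.last n) ((List.finRange n).map fun i => Fin.castSucc (σ i)), ?_, ?_⟩
    · rw [comb_leaves, finRange_succ_last n]
      apply List.Perm.append_right
      rw [show (fun i => Fin.castSucc (σ i)) = Fin.castSucc ∘ σ from rfl, ← List.map_map]
      exact (σ.map_finRange_perm).map Fin.castSucc
    · rw [comb_toLie]; rfl

/-- `Lie(n)` (here for `n+1` generators) is a free abelian group of rank
`n! = ((n+1)-1)!`, with basis the right-normed words
`w_σ = [x^{σ(1)}, [x^{σ(2)}, …, [x^{σ(n)}, x^{n+1}]…]]` indexed by permutations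
`σ` of the first `n` generators. -/
theorem lieN_free_on_rightNormed (n : ℕ) :
    ∃ b : Module.Basis (Equiv.Perm (Fin n)) ℤ (LieN (n + 1)),
      ∀ σ : Equiv.Perm (Fin n),
        (b σ : FreeLieAlgebra ℤ (Fin (n + 1))) =
          rightNormed (Fin.last n)
            ((List.finRange n).map fun i => Fin.castSucc (σ i)) := by
  have hli := wRN_linearIndependent n
  let b0 : Module.Basis (Equiv.Perm (Fin n)) ℤ (Submodule.span ℤ (Set.range (wRN n))) :=
    Module.Basis.span hli
  let e : (Submodule.span ℤ (Set.range (wRN n)) : Submodule ℤ _) ≃ₗ[ℤ] LieN (n + 1) :=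
    LinearEquiv.ofEq _ _ (lieN_eq_span n).symm
  refine ⟨b0.map e, fun σ => ?_⟩
  have h1 : ((b0.map e) σ : FreeLieAlgebra ℤ (Fin (n+1))) = (b0 σ : FreeLieAlgebra ℤ (Fin (n+1))) := by
    simp [e, Module.Basis.map_apply, LinearEquiv.coe_ofEq_apply]
  rw [h1]
  have h2 : (b0 σ : FreeLieAlgebra ℤ (Fin (n+1))) = wRN n σ :=
    congrArg Subtype.val (Module.Basis.span_apply hli σ)
  rw [h2]
  rfl

end Aux
end

section
/- As a representation of the symmetric group Σ_{n−1} (acting by permuting the generators x¹,…,x^{n−1} while fixing xⁿ), the group Lie(n) is isomorphic to the regular ℤ-representation ℤ[Σ_{n−1}]. -/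
/-- The endomorphism of the free Lie ring induced by permuting the generators. -/
noncomputable def permMap {n : ℕ} (σ : Equiv.Perm (Fin n)) :
    FreeLieAlgebra ℤ (Fin n) →ₗ[ℤ] FreeLieAlgebra ℤ (Fin n) :=
  (FreeLieAlgebra.lift ℤ (fun i => FreeLieAlgebra.of ℤ (σ i))).toLinearMap

/-- The extension of a permutation of `Fin n` to a permutation of `Fin (n+1)` fixing the
last element, via `Fin n ⊕ Fin 1 ≃ Fin (n+1)`. -/
def extendPerm {n : ℕ} (σ : Equiv.Perm (Fin n)) : Equiv.Perm (Fin (n + 1)) :=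
  finSumFinEquiv.permCongr (σ.sumCongr (Equiv.refl (Fin 1)))


namespace LieRegAux
open LieWord

variable {n : ℕ}

noncomputable def rn (n : ℕ) (l : List (Fin (n+1))) : FreeLieAlgebra ℤ (Fin (n+1)) :=
  l.foldr (fun a x => ⁅FreeLieAlgebra.of ℤ a, x⁆) (FreeLieAlgebra.of ℤ (Fin.last n))

@[simp] lemma rn_nil : rn n [] = FreeLieAlgebra.of ℤ (Fin.last n) := rfl
@[simp] lemma rn_cons (a : Fin (n+1)) (l : List (Fin (n+1))) :
    rn n (a :: l) = ⁅FreeLieAlgebra.of ℤ a, rn n l⁆ := rfl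

/-- set of right-normed words with multiset of prefix letters `L` -/
def S (n : ℕ) (L : List (Fin (n+1))) : Set (FreeLieAlgebra ℤ (Fin (n+1))) :=
  {x | ∃ m, List.Perm m L ∧ rn n m = x}

lemma span_S_mono {L L' : List (Fin (n+1))} (h : List.Perm L L') :
    Submodule.span ℤ (S n L) ≤ Submodule.span ℤ (S n L') :=
  Submodule.span_mono (by rintro x ⟨m, hm, rfl⟩; exact ⟨m, hm.trans h, rfl⟩)

lemma lie_mem_span_S (s : LieWord (Fin (n+1))) (m : List (Fin (n+1))) :
    ⁅s.toLie, rn n m⁆ ∈ Submodule.span ℤ (S n (s.leaves ++ m)) := by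
  induction s generalizing m with
  | leaf a =>
    exact Submodule.subset_span ⟨a :: m, List.Perm.refl _, rfl⟩
  | node p q hp hq =>
    have key : ∀ (s₁ s₂ : LieWord (Fin (n+1))),
        (∀ m', ⁅s₁.toLie, rn n m'⁆ ∈ Submodule.span ℤ (S n (s₁.leaves ++ m'))) →
        (∀ m', ⁅s₂.toLie, rn n m'⁆ ∈ Submodule.span ℤ (S n (s₂.leaves ++ m'))) →
        ⁅s₁.toLie, ⁅s₂.toLie, rn n m⁆⁆ ∈
          Submodule.span ℤ (S n (s₁.leaves ++ (s₂.leaves ++ m))) := by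
      intro s₁ s₂ h₁ h₂
      have himg := Submodule.apply_mem_span_image_of_mem_span
        (LieAlgebra.ad ℤ _ s₁.toLie) (h₂ m)
      refine Submodule.span_le.2 ?_ himg
      rintro x ⟨y, ⟨m₁, hm₁, rfl⟩, rfl⟩
      exact span_S_mono (hm₁.append_left _) (h₁ m₁)
    have k1 := key p q hp hq
    have k2 := key q p hq hp
    show ⁅⁅p.toLie, q.toLie⁆, rn n m⁆ ∈ _
    rw [lie_lie]
    have hperm2 : List.Perm (q.leaves ++ (p.leaves ++ m)) ((p.node q).leaves ++ m) := by
      show List.Perm _ ((p.leaves ++ q.leaves) ++ m)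
      rw [← List.append_assoc]
      exact List.perm_append_comm.append_right m
    have hperm1 : List.Perm (p.leaves ++ (q.leaves ++ m)) ((p.node q).leaves ++ m) := by
      show List.Perm _ ((p.leaves ++ q.leaves) ++ m)
      rw [← List.append_assoc]
    exact sub_mem (span_S_mono hperm1 k1) (span_S_mono hperm2 k2)

end LieRegAux

namespace LieRegAux
open LieWord
variable {n : ℕ}

/-- trees with `v = last n` occurring exactly once lie in the span of right-normed words. -/
lemma tree_mem_span (t : LieWord (Fin (n+1)))
    (h : t.leaves.count (Fin.last n) = 1) :
    t.toLie ∈ Submodule.span ℤ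
      {x | ∃ m, List.Perm (m ++ [Fin.last n]) t.leaves ∧ rn n m = x} := by
  induction t with
  | leaf a =>
    have ha : a = Fin.last n := by
      by_contra hne
      simp [leaves, List.count_singleton', Ne.symm hne] at h
      exact hne h
    subst ha
    exact Submodule.subset_span ⟨[], by simp [leaves], rfl⟩
  | node p q hp hq =>
    have hcount : p.leaves.count (Fin.last n) + q.leaves.count (Fin.last n) = 1 := by
      simpa [leaves, List.count_append] using h
    have hsub : ∀ (s₁ s₂ : LieWord (Fin (n+1))),
        (s₂.toLie ∈ Submodule.span ℤ
          {x | ∃ m, List.Perm (m ++ [Fin.last n]) s₂.leaves ∧ rn n m = x}) →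
        ⁅s₁.toLie, s₂.toLie⁆ ∈ Submodule.span ℤ
          {x | ∃ m, List.Perm (m ++ [Fin.last n]) (s₁.leaves ++ s₂.leaves) ∧ rn n m = x} := by
      intro s₁ s₂ hmem
      have himg := Submodule.apply_mem_span_image_of_mem_span
        (LieAlgebra.ad ℤ _ s₁.toLie) hmem
      refine Submodule.span_le.2 ?_ himg
      rintro x ⟨y, ⟨m, hm, rfl⟩, rfl⟩
      refine Submodule.span_le.2 ?_ (lie_mem_span_S s₁ m)
      rintro z ⟨m', hm', rfl⟩
      refine Submodule.subset_span ⟨m', ?_, rfl⟩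
      have h1 : List.Perm (m' ++ [Fin.last n]) ((s₁.leaves ++ m) ++ [Fin.last n]) :=
        hm'.append_right _
      rw [List.append_assoc] at h1
      exact h1.trans (hm.append_left _)
    rcases Nat.add_eq_one_iff.1 hcount with ⟨h1, h2⟩ | ⟨h1, h2⟩
    · -- last letter occurs in q
      have := hsub p q (hq h2)
      show ⁅p.toLie, q.toLie⁆ ∈ _
      exact this
    · -- last letter occurs in p; use antisymmetry
      have hmem := hsub q p (hp h1)
      show ⁅p.toLie, q.toLie⁆ ∈ _
      rw [← lie_skew]
      refine neg_mem ?_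
      refine Submodule.span_le.2 ?_ hmem
      rintro x ⟨m, hm, rfl⟩
      refine Submodule.subset_span ⟨m, hm.trans ?_, rfl⟩
      exact List.perm_append_comm
end LieRegAux

namespace LieRegAux
open LieWord
variable {n : ℕ}

/-- The right-normed word list attached to a permutation. -/
def word (σ : Equiv.Perm (Fin n)) : List (Fin (n+1)) :=
  (List.ofFn σ).map Fin.castSucc

/-- The basis vectors. -/
noncomputable def b (σ : Equiv.Perm (Fin n)) : FreeLieAlgebra ℤ (Fin (n+1)) :=
  rn n (word σ)

def rnTree (n : ℕ) (l : List (Fin (n+1))) : LieWord (Fin (n+1)) :=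
  l.foldr (fun a t => .node (.leaf a) t) (.leaf (Fin.last n))

@[simp] lemma rnTree_leaves (l : List (Fin (n+1))) :
    (rnTree n l).leaves = l ++ [Fin.last n] := by
  induction l with
  | nil => rfl
  | cons a l ih => simpa [rnTree, leaves] using ih

@[simp] lemma rnTree_toLie (l : List (Fin (n+1))) :
    (rnTree n l).toLie = rn n l := by
  induction l with
  | nil => rfl
  | cons a l ih => show ⁅_, _⁆ = _; rw [show (List.foldr (fun a t => (leaf a).node t) (leaf (Fin.last n)) l).toLie = rn n l from ih]; rfl

lemma finRange_succ' :
    List.finRange (n+1) = (List.finRange n).map Fin.castSucc ++ [Fin.last n] := by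
  rw [← List.ofFn_id, List.ofFn_succ']
  simp [List.concat_eq_append, List.ofFn_eq_map, Function.comp]

lemma ofFn_perm (σ : Equiv.Perm (Fin n)) : List.Perm (List.ofFn σ) (List.finRange n) := by
  apply List.perm_of_nodup_nodup_toFinset_eq
  · rw [List.ofFn_eq_map]
    exact (List.nodup_finRange n).map σ.injective
  · exact List.nodup_finRange n
  · ext x
    simp [List.mem_ofFn]
    exact σ.surjective x

lemma word_perm (σ : Equiv.Perm (Fin n)) :
    List.Perm (word σ ++ [Fin.last n]) (List.finRange (n+1)) := by
  rw [finRange_succ']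
  exact ((ofFn_perm σ).map Fin.castSucc).append_right _

lemma b_mem_LieN (σ : Equiv.Perm (Fin n)) : b σ ∈ LieN (n+1) :=
  Submodule.subset_span ⟨rnTree n (word σ), by simpa using word_perm σ, by simp [b]⟩


end LieRegAux

namespace LieRegAux
open LieWord
variable {n : ℕ}

lemma exists_perm_of_word (m : List (Fin (n+1)))
    (hm : List.Perm (m ++ [Fin.last n]) (List.finRange (n+1))) :
    ∃ σ : Equiv.Perm (Fin n), m = word σ := by
  have hM : List.Perm m ((List.finRange n).map Fin.castSucc) := by
    rw [finRange_succ'] at hm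
    exact (List.perm_append_right_iff _).1 hm
  have hne : ∀ x ∈ m, x ≠ Fin.last n := by
    intro x hx
    have := hM.mem_iff.1 hx
    simp only [List.mem_map] at this
    obtain ⟨i, -, rfl⟩ := this
    exact (Fin.castSucc_lt_last i).ne
  set m₀ : List (Fin n) := m.pmap Fin.castPred hne with hm₀
  have hmap : m₀.map Fin.castSucc = m := by
    rw [hm₀, List.map_pmap]
    simp [Fin.castSucc_castPred]
  have hnodupm : m.Nodup := hM.nodup_iff.2 ((List.nodup_finRange n).map (Fin.castSucc_injective n))
  have hnodup : m₀.Nodup := List.Nodup.of_map _ (hmap ▸ hnodupm)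
  have hlen : m₀.length = n := by
    have h1 : m.length = n := by
      have := hM.length_eq
      simpa using this
    simpa [hm₀] using h1
  have hinj : Function.Injective fun i : Fin n => m₀.get (Fin.cast hlen.symm i) := by
    intro i j hij
    have := (List.nodup_iff_injective_get.1 hnodup) hij
    exact Fin.cast_injective _ this
  let σ : Equiv.Perm (Fin n) :=
    Equiv.ofBijective _ ((Finite.injective_iff_bijective).1 hinj)
  refine ⟨σ, ?_⟩
  have hofn : List.ofFn σ = m₀ := by
    show List.ofFn (fun i : Fin n => m₀.get (Fin.cast hlen.symm i)) = m₀
    rw [← List.ofFn_congr hlen (m₀.get), List.ofFn_get]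
  rw [word, hofn, hmap]

end LieRegAux

namespace LieRegAux
open LieWord
variable {n : ℕ}

lemma lieN_le_span_b : LieN (n+1) ≤ Submodule.span ℤ (Set.range (b (n := n))) := by
  rw [LieN, Submodule.span_le]
  rintro x ⟨t, ht, rfl⟩
  have hcount : t.leaves.count (Fin.last n) = 1 := by
    rw [ht.count_eq]
    exact List.count_eq_one_of_mem (List.nodup_finRange _) (List.mem_finRange _)
  refine Submodule.span_le.2 ?_ (tree_mem_span t hcount)
  rintro z ⟨m, hm, rfl⟩
  obtain ⟨σ, rfl⟩ := exists_perm_of_word m (hm.trans ht)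
  exact Submodule.subset_span ⟨σ, rfl⟩

lemma permMap_of (π : Equiv.Perm (Fin (n+1))) (a : Fin (n+1)) :
    permMap π (FreeLieAlgebra.of ℤ a) = FreeLieAlgebra.of ℤ (π a) :=
  FreeLieAlgebra.lift_of_apply _ _

lemma permMap_lie (π : Equiv.Perm (Fin (n+1))) (x y : FreeLieAlgebra ℤ (Fin (n+1))) :
    permMap π ⁅x, y⁆ = ⁅permMap π x, permMap π y⁆ :=
  (FreeLieAlgebra.lift ℤ (fun i => FreeLieAlgebra.of ℤ (π i))).map_lie x y

lemma extendPerm_castSucc (σ : Equiv.Perm (Fin n)) (i : Fin n) :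
    extendPerm σ i.castSucc = (σ i).castSucc := by
  have h1 : (finSumFinEquiv.symm i.castSucc : Fin n ⊕ Fin 1) = Sum.inl i := by
    rw [Equiv.symm_apply_eq, finSumFinEquiv_apply_left]
    rfl
  simp [extendPerm, Equiv.permCongr_apply, h1, finSumFinEquiv_apply_left]
  rfl

lemma extendPerm_last (σ : Equiv.Perm (Fin n)) :
    extendPerm σ (Fin.last n) = Fin.last n := by
  have h1 : (finSumFinEquiv.symm (Fin.last n) : Fin n ⊕ Fin 1) = Sum.inr 0 := by
    rw [Equiv.symm_apply_eq, finSumFinEquiv_apply_right]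
    ext; simp
  simp [extendPerm, Equiv.permCongr_apply, h1, finSumFinEquiv_apply_right]
  ext; simp

lemma permMap_rn (σ : Equiv.Perm (Fin n)) (l : List (Fin (n+1))) :
    permMap (extendPerm σ) (rn n l) = rn n (l.map (extendPerm σ)) := by
  induction l with
  | nil => simp [permMap_of, extendPerm_last]
  | cons a l ih => simp [permMap_lie, permMap_of, ih]

lemma map_word (σ τ : Equiv.Perm (Fin n)) :
    (word τ).map (extendPerm σ) = word (σ * τ) := by
  simp only [word, List.map_map, List.map_ofFn]
  congr 1
  funext i
  simp [Function.comp, extendPerm_castSucc]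

lemma permMap_b (σ τ : Equiv.Perm (Fin n)) :
    permMap (extendPerm σ) (b τ) = b (σ * τ) := by
  rw [b, permMap_rn, map_word]; rfl

end LieRegAux

namespace LieRegAux
open LieWord
variable {n : ℕ}
attribute [local instance] LieRing.ofAssociativeRing

noncomputable def L (n : ℕ) : FreeLieAlgebra ℤ (Fin (n+1)) →ₗ⁅ℤ⁆ FreeAlgebra ℤ (Fin (n+1)) :=
  FreeLieAlgebra.lift ℤ (FreeAlgebra.ι ℤ)

noncomputable def toMA (n : ℕ) :
    FreeAlgebra ℤ (Fin (n+1)) ≃ₐ[ℤ] MonoidAlgebra ℤ (FreeMonoid (Fin (n+1))) :=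
  FreeAlgebra.equivMonoidAlgebraFreeMonoid

lemma toMA_iota (a : Fin (n+1)) :
    toMA n (FreeAlgebra.ι ℤ a) =
      MonoidAlgebra.single (FreeMonoid.of a) (1 : ℤ) := by
  simp [toMA, FreeAlgebra.equivMonoidAlgebraFreeMonoid, MonoidAlgebra.of_apply]

/-- Key coefficient computation. -/
lemma coeff_rn (l : List (Fin (n+1))) (hl : Fin.last n ∉ l) (w : List (Fin (n+1))) :
    (toMA n (L n (rn n l))).coeff (FreeMonoid.ofList (w ++ [Fin.last n])) =
      if w = l then 1 else 0 := by
  induction l generalizing w with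
  | nil =>
    have h0 : L n (rn n []) = FreeAlgebra.ι ℤ (Fin.last n) := by
      simp [rn_nil, L, FreeLieAlgebra.lift_of_apply]
      exact FreeLieAlgebra.lift_of_apply _ _
    classical
    rw [h0, toMA_iota, MonoidAlgebra.single_apply]
    have : (FreeMonoid.of (Fin.last n) = FreeMonoid.ofList (w ++ [Fin.last n])) ↔ w = [] := by
      constructor
      · intro h
        have := congrArg FreeMonoid.toList h
        simp [FreeMonoid.toList_of, FreeMonoid.toList_ofList] at this
        rcases w with _ | ⟨b, w'⟩
        · rfl
        · exfalso
          have hlen := congrArg List.length this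
          simp at hlen
      · rintro rfl; rfl
    simp only [this]

  | cons a l ih =>
    have hal : a ≠ Fin.last n := fun h => hl (h ▸ (List.mem_cons_self : a ∈ a :: l))
    have hvl : Fin.last n ∉ l := fun h => hl (List.mem_cons_of_mem a h)
    have hrw : L n (rn n (a :: l)) =
        FreeAlgebra.ι ℤ a * L n (rn n l) - L n (rn n l) * FreeAlgebra.ι ℤ a := by
      rw [rn_cons, LieHom.map_lie]
      rw [Ring.lie_def]
      congr 1 <;> rw [show (L n) (FreeLieAlgebra.of ℤ a) = FreeAlgebra.ι ℤ a from
        FreeLieAlgebra.lift_of_apply _ _]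
    rw [hrw]
    set G : MonoidAlgebra ℤ (FreeMonoid (Fin (n+1))) := toMA n (L n (rn n l)) with hG
    rw [map_sub, map_mul, map_mul, toMA_iota, MonoidAlgebra.coeff_sub, Finsupp.sub_apply]
    have hright : (G * MonoidAlgebra.single (FreeMonoid.of a) (1:ℤ)).coeff
        (FreeMonoid.ofList (w ++ [Fin.last n])) = 0 := by
      apply MonoidAlgebra.mul_single_apply_of_not_exists_mul
      rintro ⟨d, hd⟩
      have := congrArg FreeMonoid.toList hd
      simp only [FreeMonoid.toList_mul, FreeMonoid.toList_of, FreeMonoid.toList_ofList] at this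
      have : Fin.last n = a := by
        have h2 := congrArg (fun t => t.getLast?) this
        simpa [List.getLast?_append] using h2
      exact hal this.symm
    rw [hright, sub_zero]
    rcases w with _ | ⟨c, w'⟩
    · rw [MonoidAlgebra.single_mul_apply_of_not_exists_mul]
      · simp
      · rintro ⟨d, hd⟩
        have := congrArg FreeMonoid.toList hd
        simp only [FreeMonoid.toList_mul, FreeMonoid.toList_of, FreeMonoid.toList_ofList] at this
        simp at this
        exact hal this.1.symm
    · by_cases hca : c = a
      · subst hca
        have hmul : FreeMonoid.ofList ((c :: w') ++ [Fin.last n]) =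
            FreeMonoid.of c * FreeMonoid.ofList (w' ++ [Fin.last n]) := rfl
        rw [hmul, MonoidAlgebra.coeff_single_mul_eq_mul_coeff (H := fun z _ => mul_right_inj _),
          one_mul, ih hvl w']
        by_cases h : w' = l <;> simp [h]
      · rw [MonoidAlgebra.single_mul_apply_of_not_exists_mul]
        · simp [hca]
        · rintro ⟨d, hd⟩
          have := congrArg FreeMonoid.toList hd
          simp only [FreeMonoid.toList_mul, FreeMonoid.toList_of, FreeMonoid.toList_ofList] at this
          simp at this
          exact hca this.1

end LieRegAux

namespace LieRegAux
open LieWord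
variable {n : ℕ}
attribute [local instance] LieRing.ofAssociativeRing

noncomputable def Phi (n : ℕ) :
    FreeLieAlgebra ℤ (Fin (n+1)) →ₗ[ℤ] MonoidAlgebra ℤ (Equiv.Perm (Fin n)) :=
  (MonoidAlgebra.coeffLinearEquiv ℤ).symm.toLinearMap.comp <|
  ((Finsupp.linearEquivFunOnFinite ℤ ℤ (Equiv.Perm (Fin n))).symm.toLinearMap.comp
    (LinearMap.pi fun τ : Equiv.Perm (Fin n) =>
      Finsupp.lapply (FreeMonoid.ofList (word τ ++ [Fin.last n])))).comp
    ((MonoidAlgebra.coeffLinearEquiv ℤ).toLinearMap.comp <| (toMA n).toLinearMap.comp (L n).toLinearMap)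

lemma Phi_apply (x : FreeLieAlgebra ℤ (Fin (n+1))) (τ : Equiv.Perm (Fin n)) :
    (Phi n x).coeff τ = (toMA n (L n x)).coeff (FreeMonoid.ofList (word τ ++ [Fin.last n])) := by
  simp [Phi, Finsupp.linearEquivFunOnFinite, LinearMap.pi]
  rfl

lemma last_not_mem_word (σ : Equiv.Perm (Fin n)) : Fin.last n ∉ word σ := by
  intro h
  rw [word, List.mem_map] at h
  obtain ⟨i, -, hi⟩ := h
  exact (Fin.castSucc_lt_last i).ne hi

lemma word_injective : Function.Injective (word (n := n)) := by
  intro σ τ h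
  rw [word, word] at h
  have h1 := List.map_injective_iff.2 (Fin.castSucc_injective n) h
  have h2 := List.ofFn_injective h1
  exact Equiv.coe_fn_injective h2

lemma Phi_b (σ : Equiv.Perm (Fin n)) :
    Phi n (b σ) = MonoidAlgebra.single σ (1 : ℤ) := by
  classical
  ext τ
  rw [Phi_apply, b, coeff_rn _ (last_not_mem_word σ) (word τ),
    MonoidAlgebra.single_apply]
  by_cases h : τ = σ
  · simp [h]
  · rw [if_neg (fun hw => h (word_injective hw)), if_neg fun hs => h hs.symm]

noncomputable def psi (n : ℕ) :
    MonoidAlgebra ℤ (Equiv.Perm (Fin n)) →ₗ[ℤ] LieN (n+1) :=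
  (Finsupp.linearCombination ℤ (fun σ => (⟨b σ, b_mem_LieN σ⟩ : LieN (n+1)))).comp
    (MonoidAlgebra.coeffLinearEquiv ℤ).toLinearMap

@[simp] lemma psi_single (σ : Equiv.Perm (Fin n)) (r : ℤ) :
    psi n (MonoidAlgebra.single σ r) = r • (⟨b σ, b_mem_LieN σ⟩ : LieN (n+1)) :=
  Finsupp.linearCombination_single _ _ _

lemma psi_injective : Function.Injective (psi n) := by
  have hcomp : (Phi n).comp ((LieN (n+1)).subtype.comp (psi n)) = LinearMap.id := by
    apply MonoidAlgebra.lhom_ext'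
    intro σ
    apply LinearMap.ext_ring
    simp [Phi_b]
  intro x y hxy
  have h1 : ∀ z, Phi n ((LieN (n+1)).subtype (psi n z)) = z := fun z => by
    conv_rhs => rw [← LinearMap.id_apply (R := ℤ) z, ← hcomp]
    rfl
  rw [← h1 x, ← h1 y, hxy]

lemma psi_surjective : Function.Surjective (psi n) := by
  intro z
  have hz : (z : FreeLieAlgebra ℤ (Fin (n+1))) ∈ Submodule.span ℤ (Set.range (b (n := n))) :=
    lieN_le_span_b z.2
  rw [Submodule.mem_span_range_iff_exists_fun] at hz
  obtain ⟨c, hc⟩ := hz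
  refine ⟨∑ τ : Equiv.Perm (Fin n), MonoidAlgebra.single τ (c τ), Subtype.ext ?_⟩
  rw [map_sum, AddSubmonoidClass.coe_finset_sum, ← hc]
  refine Finset.sum_congr rfl fun τ _ => ?_
  rw [psi_single]
  simp

end LieRegAux

/-- As a representation of `Σ_n` (permuting the first `n` of the `n+1`
generators while fixing the last one), `Lie(n+1)` is isomorphic to the regular
`ℤ`-representation `ℤ[Σ_n]`: there is a `ℤ`-linear isomorphism
`e : Lie(n+1) ≃ ℤ[Σ_n]` intertwining the permutation action on `Lie(n+1)` with left
multiplication on the group ring. -/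
theorem lieN_regular_rep (n : ℕ) :
    ∃ e : MonoidAlgebra ℤ (Equiv.Perm (Fin n)) ≃ₗ[ℤ] LieN (n + 1),
      ∀ (σ : Equiv.Perm (Fin n)) (w : MonoidAlgebra ℤ (Equiv.Perm (Fin n))),
        (e (MonoidAlgebra.single σ (1 : ℤ) * w) : FreeLieAlgebra ℤ (Fin (n + 1))) =
          permMap (extendPerm σ) (e w : FreeLieAlgebra ℤ (Fin (n + 1))) := by
    classical
  refine ⟨LinearEquiv.ofBijective (LieRegAux.psi n)
    (show Function.Bijective (LieRegAux.psi n) from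
      ⟨LieRegAux.psi_injective, LieRegAux.psi_surjective⟩), fun σ w => ?_⟩
  induction w using MonoidAlgebra.induction_linear with
  | zero => simp
  | add f g hf hg =>
    simp only [mul_add, map_add, Submodule.coe_add, hf, hg]
  | single τ r =>
    rw [show (MonoidAlgebra.single σ (1:ℤ) * MonoidAlgebra.single τ r : MonoidAlgebra ℤ _)
        = MonoidAlgebra.single (σ * τ) r by rw [MonoidAlgebra.single_mul_single, one_mul]]
    rw [LinearEquiv.ofBijective_apply, LinearEquiv.ofBijective_apply,
      LieRegAux.psi_single, LieRegAux.psi_single]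
    simp only [SetLike.val_smul, map_smul]
    rw [LieRegAux.permMap_b]
end

section
/- The map φ: S¹ ∧ 𝒢𝒫𝒞₂ → S¹ ∧ S¹ given by φ(θ ∧ t) = t ∧ 2θt for θ ∈ [0,1/2] and φ(θ ∧ t) = (2−2θ)t ∧ t for θ ∈ [1/2,1] is homotopic to the swap map θ ∧ t ↦ t ∧ θ. -/
open unitInterval Set

/-- The circle `S¹ = [0,1]/(0∼1)`, which is also the Goodwillie partition complex
`𝒢𝒫𝒞₂`. -/
def S1Q : Type := Quot (fun a b : I => a = b ∨ ((a = 0 ∨ a = 1) ∧ (b = 0 ∨ b = 1)))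

instance : TopologicalSpace S1Q := inferInstanceAs (TopologicalSpace (Quot _))

/-- The point of the circle with coordinate `θ`. -/
def S1Q.mk (θ : I) : S1Q := Quot.mk _ θ

/-- The basepoint of the circle. -/
def S1Q.base : S1Q := S1Q.mk 0

/-- The smash product `S¹ ∧ S¹` (as a quotient of the product by the wedge). -/
def SmashS1 : Type :=
  Quot (fun p q : S1Q × S1Q => p = q ∨
    ((p.1 = S1Q.base ∨ p.2 = S1Q.base) ∧ (q.1 = S1Q.base ∨ q.2 = S1Q.base)))

instance : TopologicalSpace SmashS1 := inferInstanceAs (TopologicalSpace (Quot _))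

/-- The point `θ ∧ t` of `S¹ ∧ S¹`. -/
def SmashS1.mk (θ t : I) : SmashS1 := Quot.mk _ (S1Q.mk θ, S1Q.mk t)

/-- The basepoint. -/
def SmashS1.base : SmashS1 := SmashS1.mk 0 0

/-- Clamping of a real number to `[0,1]`. -/
noncomputable def prI (x : ℝ) : I := Set.projIcc 0 1 zero_le_one x

-- ======= auxiliary development =======

/-- the relation defining `S1Q` -/
abbrev S1R : I → I → Prop := fun a b : I => a = b ∨ ((a = 0 ∨ a = 1) ∧ (b = 0 ∨ b = 1))

lemma S1R_equiv : Equivalence S1R := by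
  constructor
  · exact fun a => Or.inl rfl
  · rintro a b (rfl | ⟨h1, h2⟩)
    · exact Or.inl rfl
    · exact Or.inr ⟨h2, h1⟩
  · rintro a b c (rfl | ⟨h1, h2⟩) (rfl | ⟨h3, h4⟩)
    · exact Or.inl rfl
    · exact Or.inr ⟨h3, h4⟩
    · exact Or.inr ⟨h1, h2⟩
    · exact Or.inr ⟨h1, h4⟩

lemma S1Q.mk_one : S1Q.mk 1 = S1Q.base :=
  Quot.sound (Or.inr ⟨Or.inr rfl, Or.inl rfl⟩)

lemma S1Q.mk_eq_base_iff {θ : I} : S1Q.mk θ = S1Q.base ↔ (θ = 0 ∨ θ = 1) := by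
  constructor
  · intro h
    have := Quot.eqvGen_exact h
    rcases (S1R_equiv.eqvGen_iff).mp this with h | ⟨h1, _⟩
    · exact Or.inl h
    · exact h1
  · rintro (rfl | rfl)
    · rfl
    · exact S1Q.mk_one

lemma SmashS1.mk_eq_base {θ t : I} (h : S1Q.mk θ = S1Q.base ∨ S1Q.mk t = S1Q.base) :
    SmashS1.mk θ t = SmashS1.base :=
  Quot.sound (Or.inr ⟨h, Or.inl rfl⟩)

lemma prI_coe (x : I) : prI (x : ℝ) = x := projIcc_val zero_le_one x

lemma prI_of_mem {x : ℝ} (h0 : 0 ≤ x) (h1 : x ≤ 1) : (prI x : ℝ) = x := by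
  simp [prI, projIcc_of_mem zero_le_one ⟨h0, h1⟩]

noncomputable def Xr (s θ t : ℝ) : ℝ := t * min 1 (2 - 2*θ + max 0 (2*s - 1))

noncomputable def Yr (s θ t : ℝ) : ℝ :=
  min (t + 2*s*θ*(1-t)) (min (2*θ*(t + s*(1-t))) (1 - max 0 (s - θ)))

section real
variable {s θ t : ℝ}

lemma Yr_theta0 (hs1 : s ≤ 1) (ht0 : 0 ≤ t) : Yr s 0 t = 0 := by
  unfold Yr
  rw [show (2:ℝ)*0*(t + s*(1-t)) = 0 by ring, show t + 2*s*0*(1-t) = t by ring]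
  rw [min_eq_left (by simp; linarith : (0:ℝ) ≤ 1 - max 0 (s - 0))]
  rw [min_eq_right ht0]

lemma Xr_t0 : Xr s θ 0 = 0 := by unfold Xr; ring

lemma Xr_theta1_le (hs : 2*s - 1 ≤ 0) : Xr s 1 t = 0 := by
  unfold Xr
  rw [max_eq_left hs, show (2:ℝ) - 2*1 + 0 = 0 by ring, min_eq_right zero_le_one]
  ring

lemma Yr_theta1_ge (hs : 1 ≤ 2*s) (hs1 : s ≤ 1) (ht0 : 0 ≤ t) (ht1 : t ≤ 1) :
    Yr s 1 t = 1 := by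
  unfold Yr
  rw [max_eq_left (by linarith : s - 1 ≤ 0), sub_zero]
  rw [min_eq_right (by nlinarith : (1:ℝ) ≤ 2*1*(t + s*(1-t)))]
  rw [min_eq_right (by nlinarith : (1:ℝ) ≤ t + 2*s*1*(1-t))]

-- t = 1 case, when X < 1
lemma Xr_t1 : Xr s θ 1 = min 1 (2 - 2*θ + max 0 (2*s - 1)) := by unfold Xr; ring

lemma Xr_t1_ge (h : 1 ≤ 2 - 2*θ + max 0 (2*s - 1)) : Xr s θ 1 = 1 := by
  rw [Xr_t1, min_eq_left h]

lemma Yr_t1_of_X_lt (h : 2 - 2*θ + max 0 (2*s - 1) < 1) (hθ1 : θ ≤ 1) : Yr s θ 1 = 1 := by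
  have hmax : (0:ℝ) ≤ max 0 (2*s - 1) := le_max_left _ _
  have hθ : 1 < 2*θ := by linarith
  have hsθ : s - θ ≤ 0 := by
    rcases le_or_gt (2*s - 1) 0 with h' | h'
    · linarith
    · have := le_max_right (0:ℝ) (2*s - 1); nlinarith
  unfold Yr
  rw [max_eq_left hsθ, sub_zero]
  rw [show (1:ℝ) + 2*s*θ*(1-1) = 1 by ring, show (2:ℝ)*θ*(1 + s*(1-1)) = 2*θ by ring]
  rw [min_eq_right (by linarith : (1:ℝ) ≤ 2*θ), min_eq_right le_rfl]

-- s = 0 values (the map φ)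
lemma Xr_s0_left (hθ : θ ≤ 1/2) (hs? : True) : Xr 0 θ t = t := by
  unfold Xr
  rw [max_eq_left (by norm_num), min_eq_left (by linarith)]
  ring

lemma Xr_s0_right (hθ : 1/2 ≤ θ) : Xr 0 θ t = (2 - 2*θ)*t := by
  unfold Xr
  rw [max_eq_left (by norm_num), add_zero, min_eq_right (by linarith)]
  ring

lemma Yr_s0_left (hθ0 : 0 ≤ θ) (hθ : θ ≤ 1/2) (ht0 : 0 ≤ t) (ht1 : t ≤ 1) :
    Yr 0 θ t = 2*θ*t := by
  unfold Yr
  rw [max_eq_left (by linarith : (0:ℝ) - θ ≤ 0)]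
  rw [show t + 2*0*θ*(1-t) = t by ring, show (2:ℝ)*θ*(t + 0*(1-t)) = 2*θ*t by ring, sub_zero]
  rw [min_eq_left (by nlinarith : 2*θ*t ≤ 1), min_eq_right (by nlinarith : 2*θ*t ≤ t)]

lemma Yr_s0_right (hθ : 1/2 ≤ θ) (hθ1 : θ ≤ 1) (ht0 : 0 ≤ t) (ht1 : t ≤ 1) :
    Yr 0 θ t = t := by
  unfold Yr
  rw [max_eq_left (by linarith : (0:ℝ) - θ ≤ 0)]
  rw [show t + 2*0*θ*(1-t) = t by ring, show (2:ℝ)*θ*(t + 0*(1-t)) = 2*θ*t by ring, sub_zero]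
  rw [min_eq_left (le_min (by nlinarith : t ≤ 2*θ*t) ht1)]

-- s = 1 values (the swap map)
lemma Xr_s1 (hθ1 : θ ≤ 1) : Xr 1 θ t = t := by
  unfold Xr
  rw [show (2:ℝ)*1 - 1 = 1 by ring, max_eq_right zero_le_one,
    min_eq_left (by linarith)]
  ring

lemma Yr_s1 (hθ0 : 0 ≤ θ) (hθ1 : θ ≤ 1) (ht0 : 0 ≤ t) (ht1 : t ≤ 1) : Yr 1 θ t = θ := by
  unfold Yr
  rw [max_eq_right (by linarith : (0:ℝ) ≤ 1 - θ), show (1:ℝ) - (1 - θ) = θ by ring]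
  rw [show (2:ℝ)*θ*(t + 1*(1-t)) = 2*θ by ring]
  rw [min_eq_right (by linarith : θ ≤ 2*θ)]
  rw [min_eq_right (by nlinarith : θ ≤ t + 2*1*θ*(1-t))]

end real

-- ======= the homotopy at the level of coordinates =======

noncomputable def Hm (s θ t : I) : SmashS1 :=
  SmashS1.mk (prI (Xr s θ t)) (prI (Yr s θ t))

lemma prI_zero : prI (0:ℝ) = 0 := by
  ext; rw [prI_of_mem le_rfl zero_le_one]; rfl

lemma prI_one : prI (1:ℝ) = 1 := by
  ext; rw [prI_of_mem zero_le_one le_rfl]; rfl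

lemma Hm_base (s θ t : I) (h : θ = 0 ∨ θ = 1 ∨ t = 0 ∨ t = 1) :
    Hm s θ t = SmashS1.base := by
  have hs0 : (0:ℝ) ≤ s := s.2.1
  have hs1 : (s:ℝ) ≤ 1 := s.2.2
  have hθ0 : (0:ℝ) ≤ θ := θ.2.1
  have hθ1 : (θ:ℝ) ≤ 1 := θ.2.2
  have ht0 : (0:ℝ) ≤ t := t.2.1
  have ht1 : (t:ℝ) ≤ 1 := t.2.2
  rcases h with rfl | rfl | rfl | rfl
  · -- θ = 0 : Y-coordinate is 0
    have : Yr s (((0:I)):ℝ) t = 0 := by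
      rw [show (((0:I)):ℝ) = (0:ℝ) from rfl]; exact Yr_theta0 hs1 ht0
    unfold Hm
    rw [this, prI_zero]
    exact SmashS1.mk_eq_base (Or.inr rfl)
  · -- θ = 1
    rcases le_total (2*(s:ℝ) - 1) 0 with hs | hs
    · have : Xr s (((1:I)):ℝ) t = 0 := by
        rw [show (((1:I)):ℝ) = (1:ℝ) from rfl]; exact Xr_theta1_le hs
      unfold Hm
      rw [this, prI_zero]
      exact SmashS1.mk_eq_base (Or.inl rfl)
    · have : Yr s (((1:I)):ℝ) t = 1 := by
        rw [show (((1:I)):ℝ) = (1:ℝ) from rfl]; exact Yr_theta1_ge (by linarith) hs1 ht0 ht1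
      unfold Hm
      rw [this, prI_one]
      exact SmashS1.mk_eq_base (Or.inr S1Q.mk_one)
  · -- t = 0 : X-coordinate is 0
    have : Xr s θ (((0:I)):ℝ) = 0 := Xr_t0
    unfold Hm
    rw [this, prI_zero]
    exact SmashS1.mk_eq_base (Or.inl rfl)
  · -- t = 1
    rcases le_or_gt 1 (2 - 2*(θ:ℝ) + max 0 (2*(s:ℝ) - 1)) with h | h
    · have : Xr s θ (((1:I)):ℝ) = 1 := by
        rw [show (((1:I)):ℝ) = (1:ℝ) from rfl]; exact Xr_t1_ge h
      unfold Hm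
      rw [this, prI_one]
      exact SmashS1.mk_eq_base (Or.inl S1Q.mk_one)
    · have : Yr s θ (((1:I)):ℝ) = 1 := by
        rw [show (((1:I)):ℝ) = (1:ℝ) from rfl]; exact Yr_t1_of_X_lt h hθ1
      unfold Hm
      rw [this, prI_one]
      exact SmashS1.mk_eq_base (Or.inr S1Q.mk_one)

-- the values at s = 0 and s = 1
lemma Hm_s0_left (θ t : I) (hθ : (θ:ℝ) ≤ 1/2) :
    Hm 0 θ t = SmashS1.mk t (prI (2 * θ * t)) := by
  unfold Hm
  have hx : Xr ((0:I):ℝ) θ t = (t:ℝ) := Xr_s0_left hθ trivial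
  have hy : Yr ((0:I):ℝ) θ t = 2*(θ:ℝ)*t := Yr_s0_left θ.2.1 hθ t.2.1 t.2.2
  rw [hx, hy, prI_coe]

lemma Hm_s0_right (θ t : I) (hθ : 1/2 ≤ (θ:ℝ)) :
    Hm 0 θ t = SmashS1.mk (prI ((2 - 2*θ) * t)) t := by
  unfold Hm
  have hx : Xr ((0:I):ℝ) θ t = (2 - 2*(θ:ℝ))*(t:ℝ) := Xr_s0_right hθ
  have hy : Yr ((0:I):ℝ) θ t = (t:ℝ) := Yr_s0_right hθ θ.2.2 t.2.1 t.2.2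
  rw [hx, hy, prI_coe]

lemma Hm_s1 (θ t : I) : Hm 1 θ t = SmashS1.mk t θ := by
  unfold Hm
  have hx : Xr ((1:I):ℝ) θ t = (t:ℝ) := Xr_s1 θ.2.2
  have hy : Yr ((1:I):ℝ) θ t = (θ:ℝ) := Yr_s1 θ.2.1 θ.2.2 t.2.1 t.2.2
  rw [hx, hy, prI_coe, prI_coe]

-- ======= lifting to the quotients =======

noncomputable def lift2 (s θ : I) : S1Q → SmashS1 :=
  Quot.lift (fun t => Hm s θ t) (by
    rintro a b (rfl | ⟨ha, hb⟩)
    · rfl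
    · show Hm s θ a = Hm s θ b
      rw [Hm_base s θ a (by tauto), Hm_base s θ b (by tauto)])

noncomputable def lift1 (s : I) : S1Q → S1Q → SmashS1 :=
  Quot.lift (fun θ => lift2 s θ) (by
    rintro a b (rfl | ⟨ha, hb⟩)
    · rfl
    · funext x
      induction x using Quot.ind with | _ t =>
      show Hm s a t = Hm s b t
      rw [Hm_base s a t (by tauto), Hm_base s b t (by tauto)])

lemma lift1_base (s : I) (a b : S1Q) (h : a = S1Q.base ∨ b = S1Q.base) :
    lift1 s a b = SmashS1.base := by
  induction a using Quot.ind with | _ θ =>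
  induction b using Quot.ind with | _ t =>
  show Hm s θ t = SmashS1.base
  rcases h with h | h
  · rcases S1Q.mk_eq_base_iff.mp h with rfl | rfl
    · exact Hm_base _ _ _ (Or.inl rfl)
    · exact Hm_base _ _ _ (Or.inr (Or.inl rfl))
  · rcases S1Q.mk_eq_base_iff.mp h with rfl | rfl
    · exact Hm_base _ _ _ (Or.inr (Or.inr (Or.inl rfl)))
    · exact Hm_base _ _ _ (Or.inr (Or.inr (Or.inr rfl)))

noncomputable def bigH : I × SmashS1 → SmashS1 :=
  fun p => Quot.lift (fun ab : S1Q × S1Q => lift1 p.1 ab.1 ab.2)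
    (by
      rintro a b (rfl | ⟨ha, hb⟩)
      · rfl
      · show lift1 p.1 a.1 a.2 = lift1 p.1 b.1 b.2
        rw [lift1_base _ _ _ ha, lift1_base _ _ _ hb]) p.2

lemma bigH_mk (s θ t : I) : bigH (s, SmashS1.mk θ t) = Hm s θ t := rfl

-- ======= topology: S1Q is compact Hausdorff =======

noncomputable def jCirc : S1Q → ℝ × ℝ :=
  Quot.lift (fun x : I => ((x:ℝ)*(1-(x:ℝ)), (x:ℝ)*(1-(x:ℝ))*(2*(x:ℝ)-1)))
    (by
      rintro a b (rfl | ⟨ha, hb⟩)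
      · rfl
      · rcases ha with rfl | rfl <;> rcases hb with rfl | rfl <;> norm_num)

lemma jCirc_cont : Continuous jCirc := by
  apply continuous_quot_lift
  fun_prop

lemma jCirc_inj : Function.Injective jCirc := by
  intro a b
  induction a using Quot.ind with | _ x =>
  induction b using Quot.ind with | _ y =>
  intro h
  have h1 : (x:ℝ)*(1-(x:ℝ)) = (y:ℝ)*(1-(y:ℝ)) := congrArg Prod.fst h
  have h2 : (x:ℝ)*(1-(x:ℝ))*(2*(x:ℝ)-1) = (y:ℝ)*(1-(y:ℝ))*(2*(y:ℝ)-1) :=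
    congrArg Prod.snd h
  apply Quot.sound
  by_cases hx : (x:ℝ)*(1-(x:ℝ)) = 0
  · have hy : (y:ℝ)*(1-(y:ℝ)) = 0 := by rw [← h1]; exact hx
    right
    constructor
    · rcases mul_eq_zero.mp hx with h | h
      · left; ext; simpa using h
      · right; ext; rw [show ((1:I):ℝ) = 1 from rfl]; linarith
    · rcases mul_eq_zero.mp hy with h | h
      · left; ext; simpa using h
      · right; ext; rw [show ((1:I):ℝ) = 1 from rfl]; linarith
  · left
    have hne : (y:ℝ)*(1-(y:ℝ)) ≠ 0 := by rw [← h1]; exact hx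
    rw [h1] at h2
    have := mul_left_cancel₀ hne h2
    ext; linarith

instance : T2Space S1Q := T2Space.of_injective_continuous jCirc_inj jCirc_cont
instance : CompactSpace S1Q := inferInstanceAs (CompactSpace (Quot _))
instance : CompactSpace SmashS1 := inferInstanceAs (CompactSpace (Quot _))

def mkp : I × I → S1Q × S1Q := fun x => (S1Q.mk x.1, S1Q.mk x.2)

lemma mkp_cont : Continuous mkp :=
  ((continuous_quot_mk).comp continuous_fst).prodMk
    ((continuous_quot_mk).comp continuous_snd)

lemma mkp_surj : Function.Surjective mkp := by
  rintro ⟨a, b⟩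
  induction a using Quot.ind with | _ x =>
  induction b using Quot.ind with | _ y =>
  exact ⟨(x, y), rfl⟩

lemma mkp_qm : Topology.IsQuotientMap mkp :=
  (mkp_cont.isProperMap.isClosedMap).isQuotientMap mkp_cont mkp_surj

-- ======= SmashS1 is Hausdorff =======

noncomputable def kFun (x y : I) : ℝ × ℝ × ℝ :=
  ((x:ℝ)*(1-(x:ℝ))*((y:ℝ)*(1-(y:ℝ))),
   (x:ℝ)*(1-(x:ℝ))*((y:ℝ)*(1-(y:ℝ)))*(2*(x:ℝ)-1),
   (x:ℝ)*(1-(x:ℝ))*((y:ℝ)*(1-(y:ℝ)))*(2*(y:ℝ)-1))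

lemma kFun_wedge (x y : I) (h : x = 0 ∨ x = 1 ∨ y = 0 ∨ y = 1) :
    kFun x y = (0, 0, 0) := by
  unfold kFun
  rcases h with rfl | rfl | rfl | rfl <;> norm_num

noncomputable def kC : S1Q → S1Q → ℝ × ℝ × ℝ :=
  Quot.lift (fun x => Quot.lift (fun y => kFun x y) (by
      rintro a b (rfl | ⟨ha, hb⟩)
      · rfl
      · show kFun x a = kFun x b
        rw [kFun_wedge x a (by tauto), kFun_wedge x b (by tauto)]))
    (by
      rintro a b (rfl | ⟨ha, hb⟩)
      · rfl
      · funext u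
        induction u using Quot.ind with | _ y =>
        show kFun a y = kFun b y
        rw [kFun_wedge a y (by tauto), kFun_wedge b y (by tauto)])

lemma kC_base (a b : S1Q) (h : a = S1Q.base ∨ b = S1Q.base) : kC a b = (0, 0, 0) := by
  induction a using Quot.ind with | _ x =>
  induction b using Quot.ind with | _ y =>
  show kFun x y = (0,0,0)
  rcases h with h | h
  · rcases S1Q.mk_eq_base_iff.mp h with rfl | rfl
    · exact kFun_wedge _ _ (Or.inl rfl)
    · exact kFun_wedge _ _ (Or.inr (Or.inl rfl))
  · rcases S1Q.mk_eq_base_iff.mp h with rfl | rfl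
    · exact kFun_wedge _ _ (Or.inr (Or.inr (Or.inl rfl)))
    · exact kFun_wedge _ _ (Or.inr (Or.inr (Or.inr rfl)))

noncomputable def jSmash : SmashS1 → ℝ × ℝ × ℝ :=
  Quot.lift (fun ab : S1Q × S1Q => kC ab.1 ab.2) (by
    rintro a b (rfl | ⟨ha, hb⟩)
    · rfl
    · show kC a.1 a.2 = kC b.1 b.2
      rw [kC_base _ _ ha, kC_base _ _ hb])

lemma jSmash_cont : Continuous jSmash := by
  apply continuous_quot_lift
  rw [mkp_qm.continuous_iff]
  show Continuous fun x : I × I => kFun x.1 x.2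
  fun_prop [kFun]

lemma jSmash_inj : Function.Injective jSmash := by
  intro a b
  induction a using Quot.ind with | _ p =>
  induction b using Quot.ind with | _ q =>
  obtain ⟨a1, a2⟩ := p
  induction a1 using Quot.ind with | _ x =>
  induction a2 using Quot.ind with | _ y =>
  obtain ⟨b1, b2⟩ := q
  induction b1 using Quot.ind with | _ z =>
  induction b2 using Quot.ind with | _ w =>
  intro h
  have h1 : (x:ℝ)*(1-(x:ℝ))*((y:ℝ)*(1-(y:ℝ))) = (z:ℝ)*(1-(z:ℝ))*((w:ℝ)*(1-(w:ℝ))) :=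
    congrArg (fun v => v.1) h
  have h2 : (x:ℝ)*(1-(x:ℝ))*((y:ℝ)*(1-(y:ℝ)))*(2*(x:ℝ)-1)
      = (z:ℝ)*(1-(z:ℝ))*((w:ℝ)*(1-(w:ℝ)))*(2*(z:ℝ)-1) := congrArg (fun v => v.2.1) h
  have h3 : (x:ℝ)*(1-(x:ℝ))*((y:ℝ)*(1-(y:ℝ)))*(2*(y:ℝ)-1)
      = (z:ℝ)*(1-(z:ℝ))*((w:ℝ)*(1-(w:ℝ)))*(2*(w:ℝ)-1) := congrArg (fun v => v.2.2) h
  by_cases hp : (x:ℝ)*(1-(x:ℝ))*((y:ℝ)*(1-(y:ℝ))) = 0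
  · have hq : (z:ℝ)*(1-(z:ℝ))*((w:ℝ)*(1-(w:ℝ))) = 0 := by rw [← h1]; exact hp
    apply Quot.sound
    right
    constructor
    · show S1Q.mk x = S1Q.base ∨ S1Q.mk y = S1Q.base
      rcases mul_eq_zero.mp hp with h' | h'
      · left
        rw [S1Q.mk_eq_base_iff]
        rcases mul_eq_zero.mp h' with h'' | h''
        · left; ext; simpa using h''
        · right; ext; rw [show ((1:I):ℝ) = 1 from rfl]; linarith
      · right
        rw [S1Q.mk_eq_base_iff]
        rcases mul_eq_zero.mp h' with h'' | h''
        · left; ext; simpa using h''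
        · right; ext; rw [show ((1:I):ℝ) = 1 from rfl]; linarith
    · show S1Q.mk z = S1Q.base ∨ S1Q.mk w = S1Q.base
      rcases mul_eq_zero.mp hq with h' | h'
      · left
        rw [S1Q.mk_eq_base_iff]
        rcases mul_eq_zero.mp h' with h'' | h''
        · left; ext; simpa using h''
        · right; ext; rw [show ((1:I):ℝ) = 1 from rfl]; linarith
      · right
        rw [S1Q.mk_eq_base_iff]
        rcases mul_eq_zero.mp h' with h'' | h''
        · left; ext; simpa using h''
        · right; ext; rw [show ((1:I):ℝ) = 1 from rfl]; linarith
  · have hq : (z:ℝ)*(1-(z:ℝ))*((w:ℝ)*(1-(w:ℝ))) ≠ 0 := by rw [← h1]; exact hp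
    rw [h1] at h2 h3
    have ex : (x:ℝ) = z := by have := mul_left_cancel₀ hq h2; linarith
    have ey : (y:ℝ) = w := by have := mul_left_cancel₀ hq h3; linarith
    have : x = z := by ext; exact ex
    subst this
    have : y = w := by ext; exact ey
    subst this
    rfl

instance : T2Space SmashS1 := T2Space.of_injective_continuous jSmash_inj jSmash_cont

-- ======= the full quotient map and continuity of bigH =======

noncomputable def qS : I × I → SmashS1 := fun x => SmashS1.mk x.1 x.2

lemma qS_qm : Topology.IsQuotientMap qS :=
  isQuotientMap_quot_mk.comp mkp_qm

noncomputable def Qfull : I × (I × I) → I × SmashS1 := Prod.map id qS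

lemma Qfull_cont : Continuous Qfull :=
  continuous_id.prodMap qS_qm.continuous

lemma Qfull_surj : Function.Surjective Qfull :=
  Function.Surjective.prodMap Function.surjective_id qS_qm.surjective

lemma Qfull_qm : Topology.IsQuotientMap Qfull :=
  ((Qfull_cont.isProperMap).isClosedMap).isQuotientMap Qfull_cont Qfull_surj

lemma bigH_cont : Continuous bigH := by
  rw [Qfull_qm.continuous_iff]
  show Continuous fun x : I × (I × I) => Hm x.1 x.2.1 x.2.2
  unfold Hm SmashS1.mk S1Q.mk
  apply continuous_quot_mk.comp
  apply Continuous.prodMk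
  · apply continuous_quot_mk.comp
    apply (continuous_projIcc).comp
    fun_prop [Xr]
  · apply continuous_quot_mk.comp
    apply (continuous_projIcc).comp
    fun_prop [Yr]

-- ======= the continuous maps and the homotopy =======

noncomputable def phiC : C(SmashS1, SmashS1) :=
  ⟨fun p => bigH (0, p), bigH_cont.comp (continuous_const.prodMk continuous_id)⟩

noncomputable def swC : C(SmashS1, SmashS1) :=
  ⟨fun p => bigH (1, p), bigH_cont.comp (continuous_const.prodMk continuous_id)⟩

noncomputable def bigHty : ContinuousMap.HomotopyRel phiC swC {SmashS1.base} where
  toFun := bigH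
  continuous_toFun := bigH_cont
  map_zero_left _ := rfl
  map_one_left _ := rfl
  prop' := by
    intro s x hx
    rcases hx with rfl
    show bigH (s, SmashS1.base) = bigH (0, SmashS1.base)
    have : ∀ u : I, bigH (u, SmashS1.base) = SmashS1.base := fun u => by
      rw [show SmashS1.base = SmashS1.mk 0 0 from rfl, bigH_mk]
      exact Hm_base _ _ _ (Or.inl rfl)
    rw [this s, this 0]


/-- The map `φ : S¹ ∧ 𝒢𝒫𝒞₂ → S¹ ∧ S¹` given by
`φ(θ ∧ t) = t ∧ 2θt` for `θ ∈ [0,1/2]` and `φ(θ ∧ t) = (2−2θ)t ∧ t` for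
`θ ∈ [1/2,1]` is (based) homotopic to the swap map `θ ∧ t ↦ t ∧ θ`
(here `𝒢𝒫𝒞₂ ≅ S¹`). -/
theorem phi_homotopic_swap :
    ∃ φ sw : C(SmashS1, SmashS1),
      (∀ θ t : I, (θ : ℝ) ≤ 1 / 2 →
        φ (SmashS1.mk θ t) = SmashS1.mk t (prI (2 * θ * t))) ∧
      (∀ θ t : I, 1 / 2 ≤ (θ : ℝ) →
        φ (SmashS1.mk θ t) = SmashS1.mk (prI ((2 - 2 * θ) * t)) t) ∧
      (∀ θ t : I, sw (SmashS1.mk θ t) = SmashS1.mk t θ) ∧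
      ContinuousMap.HomotopicRel φ sw {SmashS1.base} := by
  refine ⟨phiC, swC, ?_, ?_, ?_, ⟨bigHty⟩⟩
  · intro θ t hθ
    show bigH (0, SmashS1.mk θ t) = _
    rw [bigH_mk]
    exact Hm_s0_left θ t hθ
  · intro θ t hθ
    show bigH (0, SmashS1.mk θ t) = _
    rw [bigH_mk]
    exact Hm_s0_right θ t hθ
  · intro θ t
    show bigH (1, SmashS1.mk θ t) = _
    rw [bigH_mk]
    exact Hm_s1 θ t
end
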